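/- arXiv:2208.06394 — 2 statements merged into one kernel-verified Lean document; each statement's English description precedes it below -/
import Mathlib

section
/- For 0 < a < 1 and γ > 1, the inequality x_+ < a/2 holds if and only if γ > 1 - log(a² - 2a + 2)/log a. -/
theorem xplus_lt_half_a_iff (a γ : ℝ) (ha0 : 0 < a) (ha1 : a < 1) (hγ : 1 < γ) :
    (1 - a) / (a ^ (-γ) - a) < a / 2 ↔
      γ > 1 - Real.log (a ^ 2 - 2 * a + 2) / Real.log a := by
  have hb1 : 1 < a ^ (-γ) :=
    Real.one_lt_rpow_of_pos_of_lt_one_of_neg ha0 ha1 (by linarith)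
  have hba : 0 < a ^ (-γ) - a := by linarith
  have hloga : Real.log a < 0 := Real.log_neg ha0 ha1
  have hq : 0 < a ^ 2 - 2 * a + 2 := by nlinarith
  have hkey : a * a ^ (-γ) = a ^ (1 - γ) := by
    rw [show (1 - γ) = 1 + (-γ) by ring, Real.rpow_add ha0, Real.rpow_one]
  rw [div_lt_div_iff₀ hba (by norm_num : (0:ℝ) < 2)]
  constructor
  · intro h
    have h2 : a ^ 2 - 2 * a + 2 < a ^ (1 - γ) := by nlinarith
    have h3 : Real.log (a ^ 2 - 2 * a + 2) < (1 - γ) * Real.log a := by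
      calc Real.log (a ^ 2 - 2 * a + 2) < Real.log (a ^ (1 - γ)) :=
            Real.log_lt_log hq h2
        _ = (1 - γ) * Real.log a := Real.log_rpow ha0 _
    have h4 : 1 - γ < Real.log (a ^ 2 - 2 * a + 2) / Real.log a := by
      rw [lt_div_iff_of_neg hloga]; linarith [h3]
    linarith
  · intro h
    have h4 : 1 - γ < Real.log (a ^ 2 - 2 * a + 2) / Real.log a := by linarith
    have h3 : Real.log (a ^ 2 - 2 * a + 2) < (1 - γ) * Real.log a := by
      rw [lt_div_iff_of_neg hloga] at h4; linarith
    have h2 : a ^ 2 - 2 * a + 2 < a ^ (1 - γ) := by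
      exact (Real.log_lt_log_iff hq (Real.rpow_pos_of_pos ha0 _)).mp
        (by rw [Real.log_rpow ha0]; exact h3)
    nlinarith
end

section
/- Let p ∈ [1/2, 1), γ > p/(1-p), and suppose a measure bound μ(M) ≥ (γ(1-p)-p)/(γ - p(1-p)) holds. Then for any μ(M), μ([0,x_+]), μ([x_-,1]) ≥ 0 with μ(M)+μ([0,x_+])+μ([x_-,1]) = 1 and log a < 0, the quantity (μ(M) + (p_- - γp_+)μ([0,x_+]) + (p_+ - γp_-)μ([x_-,1]))·log a is at most (1 - (1+γ)p(1 - μ(M)))·log a ≤ (1 - (1+γ)p²(p+γ)/(γ - p(1-p)))·log a, where p = max(p_-,p_+) and p_- + p_+ = 1 with p_-, p_+ > 0. -/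
theorem lyapunov_exponent_bound (pm pp γ a m₀ m₁ m₂ : ℝ)
    (hpm : 0 < pm) (hpp : 0 < pp) (hsum : pm + pp = 1)
    (hγ : γ > max pm pp / (1 - max pm pp))
    (ha0 : 0 < a) (ha1 : a < 1)
    (hm₀ : 0 ≤ m₀) (hm₁ : 0 ≤ m₁) (hm₂ : 0 ≤ m₂) (hmsum : m₀ + m₁ + m₂ = 1)
    (hm₀low : m₀ ≥ (γ * (1 - max pm pp) - max pm pp) / (γ - max pm pp * (1 - max pm pp))) :
    (m₀ + (pm - γ * pp) * m₁ + (pp - γ * pm) * m₂) * Real.log a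
        ≤ (1 - (1 + γ) * max pm pp * (1 - m₀)) * Real.log a ∧
      (1 - (1 + γ) * max pm pp * (1 - m₀)) * Real.log a
        ≤ (1 - (1 + γ) * (max pm pp) ^ 2 * (max pm pp + γ)
            / (γ - max pm pp * (1 - max pm pp))) * Real.log a := by
  set p := max pm pp with hp
  have hloga : Real.log a < 0 := Real.log_neg ha0 ha1
  have hp1 : p < 1 := by
    rcases max_cases pm pp with ⟨h, _⟩ | ⟨h, _⟩ <;> rw [hp, h] <;> linarith
  have hph : 1/2 ≤ p := by
    have h1 : pm ≤ p := le_max_left _ _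
    have h2 : pp ≤ p := le_max_right _ _
    linarith
  have hγ1 : 1 ≤ γ := by
    have : (1:ℝ) ≤ p / (1 - p) := by
      rw [le_div_iff₀ (by linarith)]; linarith
    linarith
  have hD : 0 < γ - p * (1 - p) := by
    have h1 : p / (1 - p) < γ := hγ
    have h2 : p * (1 - p) ≤ p / (1 - p) := by
      rw [le_div_iff₀ (by linarith)]
      nlinarith [sq_nonneg (1 - p)]
    linarith
  constructor
  · apply mul_le_mul_of_nonpos_right _ (le_of_lt hloga)
    rcases max_cases pm pp with ⟨h, h2⟩ | ⟨h, h2⟩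
    · have hpe : p = pm := by rw [hp, h]
      have h3 : pp = 1 - pm := by linarith
      have h4 : m₂ = 1 - m₀ - m₁ := by linarith
      rw [hpe, h3, h4]
      nlinarith [mul_nonneg hm₁ (mul_nonneg (by linarith : (0:ℝ) ≤ 1 + γ)
        (by linarith : (0:ℝ) ≤ 2*pm - 1))]
    · have hpe : p = pp := by rw [hp, h]
      have h3 : pm = 1 - pp := by linarith
      have h4 : m₁ = 1 - m₀ - m₂ := by linarith
      rw [hpe, h3, h4]
      nlinarith [mul_nonneg hm₂ (mul_nonneg (by linarith : (0:ℝ) ≤ 1 + γ)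
        (by linarith : (0:ℝ) ≤ 2*pp - 1))]
  · apply mul_le_mul_of_nonpos_right _ (le_of_lt hloga)
    have hm : γ * (1 - p) - p ≤ m₀ * (γ - p * (1 - p)) := by
      have := hm₀low
      rw [ge_iff_le, div_le_iff₀ hD] at this
      linarith
    have key : (1 + γ) * p * (1 - m₀) * (γ - p * (1 - p)) ≤ (1 + γ) * p ^ 2 * (p + γ) := by
      have h1 : (1 - m₀) * (γ - p * (1 - p)) ≤ p ^ 2 + γ * p := by nlinarith
      have h2 : (0:ℝ) ≤ (1 + γ) * p := by nlinarith
      nlinarith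
    rw [sub_le_sub_iff_left, le_div_iff₀ hD]
    linarith
end
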